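/- For an r×r Jordan block J(λ) with eigenvalue λ, the matrix Wright function φ(ρ,μ;J(λ)z) is the upper-triangular Toeplitz matrix whose (i,j)-entry for j ≥ i is (z^{j-i}/(j-i)!)·φ(ρ, μ+ρ(j-i); λz). -/

import Mathlib

/-!
Write `J = λ + N` with `N` the nilpotent shift. Since `λ` and `N` commute, the `(i, j)` entry of
`(zJ)^k` is `C(k, d) λ^(k-d) z^k` with `d = j - i`, and `N^d` vanishes off the `d`-th
superdiagonal. Weighting by `1 / (k! Γ(ρk + μ))` and shifting the summation index `k = n + d`
turns the entry into `z^d / d! · φ(ρ, μ + ρd; λz)`.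

The analytic input is absolute convergence of the scalar Wright series for `ρ > -1`. For `ρ ≥ 0`,
`1 / Γ` is bounded along the points `ρk + μ`. For `-1 < ρ < 0` the reflection formula bounds
`1 / Γ(ρk + μ)` by a multiple of `Γ(|ρ|k + 1 - Re μ)`, and Gautschi's inequality shows that this
grows more slowly than `k!`.
-/

open MeasureTheory

/-- The Wright function `φ(ρ,μ;z) = ∑ z^k/(k! Γ(ρk+μ))`, with `1/Γ` the entire
reciprocal Gamma function (Mathlib's `Complex.Gamma` vanishes at the poles). -/
noncomputable def wright (ρ : ℝ) (μ : ℂ) (z : ℂ) : ℂ :=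
  ∑' k : ℕ, ((k.factorial : ℂ) * Complex.Gamma (ρ * k + μ))⁻¹ * z ^ k

/-- The Wright function of a matrix argument. -/
noncomputable def wrightM {n : ℕ} (ρ : ℝ) (μ : ℂ) (A : Matrix (Fin n) (Fin n) ℂ) :
    Matrix (Fin n) (Fin n) ℂ :=
  ∑' k : ℕ, ((k.factorial : ℂ) * Complex.Gamma (ρ * k + μ))⁻¹ • A ^ k

/-- Riemann–Liouville fractional integral of order `a > 0` based at `0`. -/
noncomputable def rlI (a : ℝ) (g : ℝ → ℂ) (y : ℝ) : ℂ :=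
  (Real.Gamma a)⁻¹ • ∫ s in (0:ℝ)..y, ((y - s) ^ (a - 1) : ℝ) • g s

/-- Riemann–Liouville fractional derivative of order `β ∈ (0,1)` based at `0`. -/
noncomputable def rlD (β : ℝ) (g : ℝ → ℂ) (y : ℝ) : ℂ :=
  deriv (rlI (1 - β) g) y

open Filter
open scoped Real

namespace Complex

theorem norm_Gamma_le_Gamma_re {s : ℂ} (hs : 0 < s.re) : ‖Gamma s‖ ≤ Real.Gamma s.re := by
  rw [Gamma_eq_integral hs, Real.Gamma_eq_integral hs, GammaIntegral]
  refine norm_integral_le_of_norm_le (Real.GammaIntegral_convergent hs) ?_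
  filter_upwards [ae_restrict_mem measurableSet_Ioi] with x hx
  rw [norm_mul, norm_cpow_eq_rpow_re_of_pos hx, norm_real, Real.norm_of_nonneg (Real.exp_pos _).le]
  simp

theorem norm_sin_le_exp_abs_im (w : ℂ) : ‖sin w‖ ≤ Real.exp |w.im| := by
  have hexp : ∀ v : ℂ, |v.re| = |w.im| → ‖exp v‖ ≤ Real.exp |w.im| := fun v hv => by
    rw [norm_exp, ← hv]; exact Real.exp_le_exp.2 (le_abs_self _)
  calc ‖sin w‖ = ‖exp (-w * I) - exp (w * I)‖ / 2 := by simp [sin]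
    _ ≤ (Real.exp |w.im| + Real.exp |w.im|) / 2 := by
        gcongr
        refine (norm_sub_le _ _).trans (add_le_add (hexp _ ?_) (hexp _ ?_)) <;> simp
    _ = Real.exp |w.im| := by ring

theorem inv_Gamma_eq_sin_mul_Gamma_one_sub {s : ℂ} (h : Gamma (1 - s) ≠ 0) :
    (Gamma s)⁻¹ = sin (π * s) * Gamma (1 - s) / π := by
  have hrefl := Gamma_mul_Gamma_one_sub s
  by_cases hsin : sin (π * s) = 0
  · rw [hsin, div_zero, mul_eq_zero] at hrefl
    simp [hrefl.resolve_right h, hsin]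
  · rw [eq_div_iff hsin] at hrefl
    refine inv_eq_of_mul_eq_one_right ?_
    field_simp
    linear_combination hrefl

theorem norm_inv_Gamma_le_of_re_lt_one {s : ℂ} (hs : s.re < 1) :
    ‖(Gamma s)⁻¹‖ ≤ Real.exp (π * |s.im|) / π * Real.Gamma (1 - s.re) := by
  have hre : (1 - s).re = 1 - s.re := by simp
  have hpos : 0 < (1 - s).re := by rw [hre]; linarith
  rw [inv_Gamma_eq_sin_mul_Gamma_one_sub (Gamma_ne_zero_of_re_pos hpos), norm_div, norm_mul,
    norm_real, Real.norm_of_nonneg Real.pi_pos.le, ← hre, div_mul_eq_mul_div]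
  gcongr
  · simpa [abs_mul, abs_of_pos Real.pi_pos] using norm_sin_le_exp_abs_im (π * s)
  · exact norm_Gamma_le_Gamma_re hpos


/-- `1 / Γ` is bounded on horizontal half-lines going right: on a compact initial segment by
continuity, and beyond it by `1 / Γ(s) = (s - 1)⁻¹ / Γ(s - 1)` with `‖s - 1‖ ≥ 1`. -/
theorem exists_norm_inv_Gamma_le_of_im_eq (c t : ℝ) :
    ∃ C, ∀ s : ℂ, s.im = t → c ≤ s.re → ‖(Gamma s)⁻¹‖ ≤ C := by
  let line : ℝ → ℂ := fun x => x + t * I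
  have hline : ∀ s : ℂ, s.im = t → s = line s.re := fun s hs => by
    apply Complex.ext <;> simp [line, hs]
  obtain ⟨C, hC⟩ := (isCompact_Icc (a := min c 1) (b := 2)).exists_bound_of_continuousOn
    (differentiable_one_div_Gamma.continuous.comp (by fun_prop : Continuous line)).continuousOn
  have hbound : ∀ n : ℕ, ∀ s : ℂ, s.im = t → min c 1 ≤ s.re → s.re ≤ n + 2 →
      ‖(Gamma s)⁻¹‖ ≤ C := by
    intro n
    induction n with
    | zero =>
      intro s hs hc h2
      rw [hline s hs]
      exact hC _ ⟨hc, by simpa using h2⟩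
    | succ n ih =>
      intro s hs hc h2
      by_cases hs2 : s.re ≤ 2
      · rw [hline s hs]
        exact hC _ ⟨hc, hs2⟩
      rw [not_le] at hs2
      have hre : 1 ≤ (s - 1).re := by simp; linarith
      have hne : s - 1 ≠ 0 := fun h => by rw [h] at hre; norm_num at hre
      rw [← sub_add_cancel s 1, Gamma_add_one _ hne, mul_inv, norm_mul, ← one_mul C]
      refine mul_le_mul ?_ (ih _ (by simpa using hs) ((min_le_right c 1).trans hre) ?_)
        (norm_nonneg _) zero_le_one
      · rw [norm_inv]
        exact inv_le_one_of_one_le₀ (hre.trans (re_le_norm _))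
      · simp; push_cast at h2; linarith
  exact ⟨C, fun s hs hc => hbound ⌈s.re⌉₊ s hs ((min_le_left _ _).trans hc)
    ((Nat.le_ceil _).trans (by linarith))⟩

end Complex

/-- Gautschi's inequality, from log-convexity of `Γ` between `y` and `y + 1`. -/
theorem Real.Gamma_add_le_Gamma_mul_rpow {y a : ℝ} (hy : 0 < y) (ha0 : 0 < a) (ha1 : a < 1) :
    Real.Gamma (y + a) ≤ Real.Gamma y * y ^ a := by
  have h := Real.Gamma_mul_add_mul_le_rpow_Gamma_mul_rpow_Gamma hy (by linarith : 0 < y + 1)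
    (by linarith : 0 < 1 - a) ha0 (by ring)
  have hΓ := Real.Gamma_pos_of_pos hy
  have hsplit : Real.Gamma y ^ (1 - a) * Real.Gamma y ^ a = Real.Gamma y := by
    rw [← Real.rpow_add hΓ, sub_add_cancel, Real.rpow_one]
  rw [show (1 - a) * y + a * (y + 1) = y + a by ring, Real.Gamma_add_one hy.ne',
    Real.mul_rpow hy.le hΓ.le] at h
  calc Real.Gamma (y + a) ≤ Real.Gamma y ^ (1 - a) * (y ^ a * Real.Gamma y ^ a) := h
    _ = (Real.Gamma y ^ (1 - a) * Real.Gamma y ^ a) * y ^ a := by ring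
    _ = Real.Gamma y * y ^ a := by rw [hsplit]

open Nat in
theorem Real.summable_Gamma_mul_add_mul_pow_div_factorial {a : ℝ} (ha0 : 0 < a) (ha1 : a < 1)
    (b : ℝ) {x : ℝ} (hx : 0 ≤ x) :
    Summable fun n : ℕ => Real.Gamma (a * n + b) * x ^ n / n ! := by
  refine summable_of_ratio_norm_eventually_le (r := 1 / 2) (by norm_num) ?_
  have hn : Tendsto (fun n : ℕ => (n : ℝ)) atTop atTop := tendsto_natCast_atTop_atTop
  have hn1 : Tendsto (fun n : ℕ => ((n : ℝ) + 1) ^ (1 - a)) atTop atTop :=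
    (tendsto_rpow_atTop (by linarith)).comp (tendsto_atTop_add_const_right _ 1 hn)
  filter_upwards [hn.eventually_gt_atTop (-b / a), hn.eventually_ge_atTop ((b - 1) / (1 - a)),
    hn1.eventually_ge_atTop (2 * x)] with n hy_pos hy_le hx_le
  set y := a * n + b
  rw [div_lt_iff₀ ha0] at hy_pos
  rw [div_le_iff₀ (by linarith)] at hy_le
  have hy : 0 < y := by linarith
  have hn0 : (0 : ℝ) < n + 1 := by positivity
  have hgrowth : y ^ a * x ≤ (n + 1) / 2 := calc
    y ^ a * x ≤ ((n : ℝ) + 1) ^ a * (((n : ℝ) + 1) ^ (1 - a) / 2) := by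
      gcongr
      · linarith
      · linarith
    _ = (n + 1) / 2 := by rw [← mul_div_assoc, ← Real.rpow_add hn0, add_sub_cancel, Real.rpow_one]
  have hfn : 0 ≤ Real.Gamma y * x ^ n / n ! := by
    have := Real.Gamma_pos_of_pos hy; positivity
  rw [Real.norm_of_nonneg hfn, Real.norm_of_nonneg (by
    have := Real.Gamma_pos_of_pos (show 0 < a * (n + 1 : ℕ) + b by push_cast; linarith)
    positivity)]
  calc Real.Gamma (a * (n + 1 : ℕ) + b) * x ^ (n + 1) / (n + 1)!
      = Real.Gamma (y + a) * x ^ (n + 1) / (n + 1)! := by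
        rw [show a * ((n + 1 : ℕ) : ℝ) + b = y + a by push_cast; ring]
    _ ≤ Real.Gamma y * y ^ a * x ^ (n + 1) / (n + 1)! := by
      gcongr; exact Real.Gamma_add_le_Gamma_mul_rpow hy ha0 ha1
    _ = y ^ a * x / (n + 1) * (Real.Gamma y * x ^ n / n !) := by
      rw [factorial_succ]; push_cast; field_simp; ring
    _ ≤ (n + 1) / 2 / (n + 1) * (Real.Gamma y * x ^ n / n !) := by gcongr
    _ = 1 / 2 * (Real.Gamma y * x ^ n / n !) := by field_simp

noncomputable def wrightCoeff (ρ : ℝ) (μ : ℂ) (k : ℕ) : ℂ :=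
  ((k.factorial : ℂ) * Complex.Gamma (ρ * k + μ))⁻¹

theorem norm_wrightCoeff_mul_pow (ρ : ℝ) (μ w : ℂ) (k : ℕ) :
    ‖wrightCoeff ρ μ k * w ^ k‖ = ‖(Complex.Gamma (ρ * k + μ))⁻¹‖ * (‖w‖ ^ k / k.factorial) := by
  rw [wrightCoeff, mul_inv, norm_mul, norm_mul, norm_inv, Complex.norm_natCast, norm_pow]
  ring

theorem summable_wrightCoeff_mul_pow {ρ : ℝ} (hρ : -1 < ρ) (μ w : ℂ) :
    Summable fun k => wrightCoeff ρ μ k * w ^ k := by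
  rcases le_or_gt 0 ρ with hρ0 | hρ0
  · obtain ⟨C, hC⟩ := Complex.exists_norm_inv_Gamma_le_of_im_eq μ.re μ.im
    refine .of_norm_bounded ((Real.summable_pow_div_factorial ‖w‖).mul_left C) fun k => ?_
    rw [norm_wrightCoeff_mul_pow]
    gcongr
    exact hC _ (by simp) (by simpa using by positivity)
  · let K := Real.exp (π * |μ.im|) / π
    refine .of_norm_bounded_eventually_nat ((Real.summable_Gamma_mul_add_mul_pow_div_factorial
      (a := -ρ) (by linarith) (by linarith) (1 - μ.re) (norm_nonneg w)).mul_left K) ?_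
    filter_upwards [tendsto_natCast_atTop_atTop.eventually_gt_atTop ((μ.re - 1) / -ρ)] with k hk
    rw [div_lt_iff₀ (by linarith)] at hk
    have hre : ((ρ : ℂ) * k + μ).re < 1 := by simp; linarith
    calc ‖wrightCoeff ρ μ k * w ^ k‖
        ≤ K * Real.Gamma (1 - ((ρ : ℂ) * k + μ).re) * (‖w‖ ^ k / k.factorial) := by
          rw [norm_wrightCoeff_mul_pow]
          gcongr
          simpa [K] using Complex.norm_inv_Gamma_le_of_re_lt_one hre
      _ = K * (Real.Gamma (-ρ * k + (1 - μ.re)) * ‖w‖ ^ k / k.factorial) := by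
          simp only [Complex.add_re, Complex.mul_re, Complex.ofReal_re, Complex.ofReal_im,
            Complex.natCast_re, Complex.natCast_im, mul_zero, sub_zero]
          ring_nf

theorem hasSum_wright {ρ : ℝ} (hρ : -1 < ρ) (μ w : ℂ) :
    HasSum (fun k => wrightCoeff ρ μ k * w ^ k) (wright ρ μ w) :=
  (summable_wrightCoeff_mul_pow hρ μ w).hasSum

section JordanBlock

variable {R : Type*} [CommSemiring R] {r : ℕ}

variable (R r) in
def shiftMatrix : Matrix (Fin r) (Fin r) R :=
  Matrix.of fun i j => if (i : ℕ) + 1 = j then 1 else 0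

theorem shiftMatrix_pow_apply (m : ℕ) (i j : Fin r) :
    (shiftMatrix R r ^ m) i j = if (i : ℕ) + m = j then 1 else 0 := by
  induction m generalizing i with
  | zero => simp [Matrix.one_apply, Fin.ext_iff]
  | succ m ih =>
    rw [pow_succ', Matrix.mul_apply]
    by_cases hi : (i : ℕ) + 1 < r
    · rw [Fintype.sum_eq_single ⟨i + 1, hi⟩]
      · rw [ih]
        simp [shiftMatrix, add_right_comm _ 1 m, add_assoc]
      · intro l hl
        simp only [shiftMatrix, Matrix.of_apply, ite_mul, one_mul, zero_mul]
        exact if_neg fun h => hl (Fin.ext h.symm)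
    · rw [Finset.sum_eq_zero fun l _ => by simp [shiftMatrix]; omega, if_neg (by omega)]

theorem jordanBlock_pow_apply {lam : R} {J : Matrix (Fin r) (Fin r) R}
    (hJ : ∀ i j : Fin r, J i j = if i = j then lam else if (i : ℕ) + 1 = (j : ℕ) then 1 else 0)
    (k : ℕ) (i j : Fin r) :
    (J ^ k) i j = if (i : ℕ) ≤ j then (k.choose (j - i) : R) * lam ^ (k - (j - i)) else 0 := by
  have hJ_eq : J = shiftMatrix R r + lam • 1 := by
    ext a b
    rw [hJ]
    by_cases hab : a = b
    · simp [hab, shiftMatrix]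
    · simp [hab, shiftMatrix, Matrix.one_apply_ne hab]
  rw [hJ_eq, ((Commute.one_right _).smul_right lam).add_pow, Matrix.sum_apply]
  simp only [smul_pow, one_pow, mul_smul_comm, mul_one, ← nsmul_eq_mul', Matrix.smul_apply,
    shiftMatrix_pow_apply, smul_eq_mul, nsmul_eq_mul]
  split_ifs with hij
  · have hshift : ∀ m : ℕ, (i : ℕ) + m = j ↔ m = j - i := fun m => by omega
    simp only [hshift, mul_ite, mul_one, mul_zero, Finset.sum_ite_eq', Finset.mem_range]
    split_ifs with hd
    · ring
    · rw [Nat.choose_eq_zero_of_lt (by omega), Nat.cast_zero, zero_mul]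
  · exact Finset.sum_eq_zero fun m _ => by rw [if_neg (by omega), mul_zero, mul_zero]

end JordanBlock

theorem wrightCoeff_add_mul_choose (ρ : ℝ) (μ : ℂ) (n d : ℕ) :
    wrightCoeff ρ μ (n + d) * (n + d).choose d = wrightCoeff ρ (μ + ρ * d) n / d.factorial := by
  have hfac : ((n + d).choose d : ℂ) * d.factorial * n.factorial = (n + d).factorial := by
    exact_mod_cast Nat.add_sub_cancel n d ▸ Nat.choose_mul_factorial_mul_factorial (by omega)
  have hchoose : ((n + d).choose d : ℂ) ≠ 0 := by exact_mod_cast (Nat.choose_pos (by omega)).ne'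
  rw [wrightCoeff, wrightCoeff, ← hfac, show (ρ : ℂ) * ((n + d : ℕ) : ℂ) + μ = ρ * n + (μ + ρ * d)
    by push_cast; ring]
  simp only [mul_inv]
  field_simp

theorem hasSum_wrightCoeff_mul_choose_mul_pow {ρ : ℝ} (hρ : -1 < ρ) (μ lam z : ℂ) (d : ℕ) :
    HasSum (fun k => wrightCoeff ρ μ k * (k.choose d * lam ^ (k - d) * z ^ k))
      (z ^ d / d.factorial * wright ρ (μ + ρ * d) (lam * z)) := by
  have hshift := (hasSum_wright hρ (μ + ρ * d) (lam * z)).mul_left (z ^ d / d.factorial)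
  have hterm : ∀ n, z ^ d / d.factorial * (wrightCoeff ρ (μ + ρ * d) n * (lam * z) ^ n) =
      wrightCoeff ρ μ (n + d) * ((n + d).choose d * lam ^ (n + d - d) * z ^ (n + d)) := by
    intro n
    rw [Nat.add_sub_cancel, pow_add, mul_pow]
    calc _ = wrightCoeff ρ (μ + ρ * d) n / d.factorial * (lam ^ n * z ^ n * z ^ d) := by ring
      _ = _ := by rw [← wrightCoeff_add_mul_choose]; ring
  simp only [hterm] at hshift
  have hinit : ∑ k ∈ Finset.range d,
      wrightCoeff ρ μ k * (k.choose d * lam ^ (k - d) * z ^ k) = 0 :=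
    Finset.sum_eq_zero fun k hk => by simp [Nat.choose_eq_zero_of_lt (Finset.mem_range.1 hk)]
  have := (hasSum_nat_add_iff (f := fun k =>
    wrightCoeff ρ μ k * (k.choose d * lam ^ (k - d) * z ^ k)) d).1 hshift
  rwa [hinit, add_zero] at this

theorem wrightM_apply_eq_of_hasSum {n : ℕ} {ρ : ℝ} {μ : ℂ} {A : Matrix (Fin n) (Fin n) ℂ}
    {T : Fin n → Fin n → ℂ} (h : ∀ i j, HasSum (fun k => wrightCoeff ρ μ k * (A ^ k) i j) (T i j))
    (i j : Fin n) : wrightM ρ μ A i j = T i j :=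
  congrFun₂ (Pi.hasSum.2 fun i => Pi.hasSum.2 fun j => h i j).tsum_eq i j

theorem wrightM_jordan_block (r : ℕ) (ρ : ℝ) (hρ : -1 < ρ) (μ : ℂ) (lam : ℂ)
    (J : Matrix (Fin r) (Fin r) ℂ)
    (hJ : ∀ i j : Fin r, J i j =
      if i = j then lam else if (i : ℕ) + 1 = (j : ℕ) then 1 else 0)
    (z : ℂ) (i j : Fin r) :
    wrightM ρ μ (z • J) i j =
      if (i : ℕ) ≤ (j : ℕ) then
        z ^ ((j : ℕ) - (i : ℕ)) / (((j : ℕ) - (i : ℕ)).factorial : ℂ) *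
          wright ρ (μ + (ρ : ℂ) * (((j : ℕ) - (i : ℕ) : ℕ) : ℂ)) (lam * z)
      else 0 := by
  revert i j
  refine wrightM_apply_eq_of_hasSum fun i j => ?_
  simp only [smul_pow, Matrix.smul_apply, jordanBlock_pow_apply hJ, smul_eq_mul, mul_ite, mul_zero]
  split_ifs
  · convert hasSum_wrightCoeff_mul_choose_mul_pow hρ μ lam z (j - i) using 2 with k
    ring
  · exact hasSum_zero
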